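/- Let ε ∈ (−1,1) and ξ ∈ {−1,1}. Set α₊ := (√(1+εξ) + √(1−εξ))/2, α₋ := (√(1+εξ) − √(1−εξ))/2, k₋ := −iξα₋/√(1−ε²), k₊ := iα₊/√(1−ε²), and define φ₀₀(x₁,x₂) := exp(−(α₊/2)(x₁² + x₂²) − k₋x₁ − k₊x₂ − ξα₋ x₁x₂). Then φ₀₀ is an eigenfunction of the non-self-adjoint Hamiltonian H = p₁² + x₁² + p₂² + x₂² + 2i x₂ + 2ε x₁x₂ with eigenvalue √(1+εξ) + √(1−εξ) + 1/(1−ε²): for all (x₁,x₂) ∈ ℝ², −∂₁²φ₀₀ − ∂₂²φ₀₀ + (x₁² + x₂² + 2i x₂ + 2ε x₁x₂) φ₀₀ = (√(1+εξ) + √(1−εξ) + 1/(1−ε²)) φ₀₀. -/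

import Mathlib

/-- Partial derivative in the first variable of a function `ℝ × ℝ → ℂ`. -/
noncomputable def pd1 (f : ℝ × ℝ → ℂ) (x : ℝ × ℝ) : ℂ :=
  deriv (fun t : ℝ => f (t, x.2)) x.1

/-- Partial derivative in the second variable of a function `ℝ × ℝ → ℂ`. -/
noncomputable def pd2 (f : ℝ × ℝ → ℂ) (x : ℝ × ℝ) : ℂ :=
  deriv (fun t : ℝ => f (x.1, t)) x.2

/-!
Since `φ₀₀ = exp Q` with `Q` a quadratic polynomial, `∂ⱼ²φ₀₀ = (∂ⱼ²Q + (∂ⱼQ)²) φ₀₀`, so the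
eigenvalue equation is a polynomial identity in `(x₁, x₂)`. Its coefficients vanish because
`p = α₊` and `q = ξα₋` satisfy `p² + q² = 1`, `2pq = ε` and `p² - q² = √(1-ε²)`: the first two
cancel the quadratic part of the potential, and the linear shift `(k₋, k₊) = i(-q, p)/√(1-ε²)`
then cancels `2ix₂`, leaving the constant `2p - (k₋² + k₊²) = 2α₊ + 1/(1-ε²)`.
-/

open Complex

theorem hasDerivAt_cexp_quadratic (A B C : ℂ) (x : ℝ) :
    HasDerivAt (fun t : ℝ => cexp (A * t ^ 2 + B * t + C))
      ((2 * A * x + B) * cexp (A * x ^ 2 + B * x + C)) x := by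
  have hq : HasDerivAt (fun z : ℂ => A * z ^ 2 + B * z + C) (2 * A * x + B) x :=
    (((hasDerivAt_pow 2 _).const_mul A).add ((hasDerivAt_id _).const_mul B)).add_const C
      |>.congr_deriv (by ring)
  simpa only [mul_comm] using hq.cexp.comp_ofReal

theorem deriv_deriv_cexp_quadratic (A B C : ℂ) (x : ℝ) :
    deriv (deriv fun t : ℝ => cexp (A * t ^ 2 + B * t + C)) x
      = (2 * A + (2 * A * x + B) ^ 2) * cexp (A * x ^ 2 + B * x + C) := by
  have hderiv : deriv (fun t : ℝ => cexp (A * t ^ 2 + B * t + C))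
      = fun t : ℝ => (2 * A * t + B) * cexp (A * t ^ 2 + B * t + C) :=
    funext fun t => (hasDerivAt_cexp_quadratic A B C t).deriv
  have hlin : HasDerivAt (fun t : ℝ => 2 * A * (t : ℂ) + B) (2 * A) x := by
    simpa using ((hasDerivAt_id x).ofReal_comp.const_mul (2 * A)).add_const B
  rw [hderiv]
  exact (hlin.mul (hasDerivAt_cexp_quadratic A B C x)).deriv.trans (by ring)

section QuadraticExponent

variable {a b c d e f : ℂ} {φ : ℝ × ℝ → ℂ}

theorem pd1_pd1_eq_of_eq_cexp_quadratic
    (hφ : ∀ x₁ x₂ : ℝ, φ (x₁, x₂)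
      = cexp (a * x₁ ^ 2 + b * x₂ ^ 2 + c * x₁ * x₂ + d * x₁ + e * x₂ + f))
    (x₁ x₂ : ℝ) :
    pd1 (pd1 φ) (x₁, x₂) = (2 * a + (2 * a * x₁ + c * x₂ + d) ^ 2) * φ (x₁, x₂) := by
  have hslice : (fun t : ℝ => φ (t, x₂))
      = fun t : ℝ => cexp (a * t ^ 2 + (c * x₂ + d) * t + (b * x₂ ^ 2 + e * x₂ + f)) :=
    funext fun t => by rw [hφ]; ring_nf
  change deriv (deriv fun t : ℝ => φ (t, x₂)) x₁ = _
  rw [hslice, deriv_deriv_cexp_quadratic, hφ]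
  ring_nf

theorem pd2_pd2_eq_of_eq_cexp_quadratic
    (hφ : ∀ x₁ x₂ : ℝ, φ (x₁, x₂)
      = cexp (a * x₁ ^ 2 + b * x₂ ^ 2 + c * x₁ * x₂ + d * x₁ + e * x₂ + f))
    (x₁ x₂ : ℝ) :
    pd2 (pd2 φ) (x₁, x₂) = (2 * b + (2 * b * x₂ + c * x₁ + e) ^ 2) * φ (x₁, x₂) := by
  have hslice : (fun t : ℝ => φ (x₁, t))
      = fun t : ℝ => cexp (b * t ^ 2 + (c * x₁ + e) * t + (a * x₁ ^ 2 + d * x₁ + f)) :=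
    funext fun t => by rw [hφ]; ring_nf
  change deriv (deriv fun t : ℝ => φ (x₁, t)) x₂ = _
  rw [hslice, deriv_deriv_cexp_quadratic, hφ]
  ring_nf

end QuadraticExponent

theorem gaussian_exponent_identity {p q k₁ k₂ ε : ℂ} (h_add : p ^ 2 + q ^ 2 = 1)
    (h_mul : 2 * p * q = ε) (h₁ : p * k₁ + q * k₂ = 0) (h₂ : q * k₁ + p * k₂ = I) (x₁ x₂ : ℂ) :
    -(-p + (p * x₁ + q * x₂ + k₁) ^ 2) - (-p + (p * x₂ + q * x₁ + k₂) ^ 2)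
        + (x₁ ^ 2 + x₂ ^ 2 + 2 * I * x₂ + 2 * ε * x₁ * x₂)
      = 2 * p - (k₁ ^ 2 + k₂ ^ 2) := by
  linear_combination -(x₁ ^ 2 + x₂ ^ 2) * h_add - 2 * x₁ * x₂ * h_mul - 2 * x₁ * h₁ - 2 * x₂ * h₂

section Shift

variable {p q s k₁ k₂ : ℂ}

theorem mul_add_mul_eq_zero_of_shift (hk₁ : k₁ = -I * q / s) (hk₂ : k₂ = I * p / s) :
    p * k₁ + q * k₂ = 0 := by
  subst hk₁ hk₂
  ring

theorem mul_add_mul_eq_I_of_shift (hk₁ : k₁ = -I * q / s) (hk₂ : k₂ = I * p / s)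
    (h_sub : p ^ 2 - q ^ 2 = s) (hs : s ≠ 0) : q * k₁ + p * k₂ = I := by
  subst hk₁ hk₂
  field_simp
  linear_combination h_sub

theorem sq_add_sq_of_shift (hk₁ : k₁ = -I * q / s) (hk₂ : k₂ = I * p / s) (hs : s ≠ 0) :
    k₁ ^ 2 + k₂ ^ 2 = -(p ^ 2 + q ^ 2) / s ^ 2 := by
  subst hk₁ hk₂
  field_simp
  linear_combination (q ^ 2 + p ^ 2) * I_sq

theorem gaussian_ground_state_identity {p q s ε k₁ k₂ : ℂ} (h_add : p ^ 2 + q ^ 2 = 1)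
    (h_mul : 2 * p * q = ε) (h_sub : p ^ 2 - q ^ 2 = s) (hs : s ≠ 0)
    (hk₁ : k₁ = -I * q / s) (hk₂ : k₂ = I * p / s) (x₁ x₂ : ℂ) :
    -(-p + (p * x₁ + q * x₂ + k₁) ^ 2) - (-p + (p * x₂ + q * x₁ + k₂) ^ 2)
        + (x₁ ^ 2 + x₂ ^ 2 + 2 * I * x₂ + 2 * ε * x₁ * x₂)
      = 2 * p + 1 / (1 - ε ^ 2) := by
  have hs_sq : s ^ 2 = 1 - ε ^ 2 := by
    rw [← h_sub, ← h_mul]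
    linear_combination (p ^ 2 + q ^ 2 + 1) * h_add
  rw [gaussian_exponent_identity h_add h_mul (mul_add_mul_eq_zero_of_shift hk₁ hk₂)
    (mul_add_mul_eq_I_of_shift hk₁ hk₂ h_sub hs), sq_add_sq_of_shift hk₁ hk₂ hs, h_add, hs_sq]
  ring

end Shift

section Parameters

variable {ε ξ αp αm : ℝ}

theorem alphaPlus_sq_add_sq (hξ : ξ ^ 2 = 1) (h_add_nonneg : 0 ≤ 1 + ε * ξ)
    (h_sub_nonneg : 0 ≤ 1 - ε * ξ)
    (hαp : αp = (√(1 + ε * ξ) + √(1 - ε * ξ)) / 2)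
    (hαm : αm = (√(1 + ε * ξ) - √(1 - ε * ξ)) / 2) :
    αp ^ 2 + (ξ * αm) ^ 2 = 1 := by
  rw [hαp, hαm, mul_pow, hξ, one_mul]
  linear_combination (Real.sq_sqrt h_add_nonneg + Real.sq_sqrt h_sub_nonneg) / 2

theorem two_mul_alphaPlus_mul (hξ : ξ ^ 2 = 1) (h_add_nonneg : 0 ≤ 1 + ε * ξ)
    (h_sub_nonneg : 0 ≤ 1 - ε * ξ)
    (hαp : αp = (√(1 + ε * ξ) + √(1 - ε * ξ)) / 2)
    (hαm : αm = (√(1 + ε * ξ) - √(1 - ε * ξ)) / 2) :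
    2 * αp * (ξ * αm) = ε := by
  rw [hαp, hαm]
  linear_combination ξ * (Real.sq_sqrt h_add_nonneg - Real.sq_sqrt h_sub_nonneg) / 2 + ε * hξ

theorem alphaPlus_sq_sub_sq (hξ : ξ ^ 2 = 1) (h_add_nonneg : 0 ≤ 1 + ε * ξ)
    (hαp : αp = (√(1 + ε * ξ) + √(1 - ε * ξ)) / 2)
    (hαm : αm = (√(1 + ε * ξ) - √(1 - ε * ξ)) / 2) :
    αp ^ 2 - (ξ * αm) ^ 2 = √(1 - ε ^ 2) := by
  rw [hαp, hαm, show 1 - ε ^ 2 = (1 + ε * ξ) * (1 - ε * ξ) by linear_combination ε ^ 2 * hξ,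
    Real.sqrt_mul h_add_nonneg]
  linear_combination -(√(1 + ε * ξ) - √(1 - ε * ξ)) ^ 2 / 4 * hξ

end Parameters

/-- Example one, ground state equation: the function
`φ₀₀(x₁,x₂) = exp(−(α₊/2)(x₁²+x₂²) − k₋x₁ − k₊x₂ − ξα₋x₁x₂)` is an
eigenfunction of `H = p₁²+x₁²+p₂²+x₂²+2ix₂+2εx₁x₂` with eigenvalue
`√(1+εξ) + √(1−εξ) + 1/(1−ε²)`. -/
theorem example_one_ground_state
    (ε ξ : ℝ) (hε : ε ∈ Set.Ioo (-1 : ℝ) 1) (hξ : ξ = -1 ∨ ξ = 1)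
    (αp αm : ℝ) (km kp : ℂ)
    (hαp : αp = (Real.sqrt (1 + ε * ξ) + Real.sqrt (1 - ε * ξ)) / 2)
    (hαm : αm = (Real.sqrt (1 + ε * ξ) - Real.sqrt (1 - ε * ξ)) / 2)
    (hkm : km = -Complex.I * (ξ : ℂ) * (αm : ℂ) / ((Real.sqrt (1 - ε ^ 2) : ℝ) : ℂ))
    (hkp : kp = Complex.I * (αp : ℂ) / ((Real.sqrt (1 - ε ^ 2) : ℝ) : ℂ))
    (φ : ℝ × ℝ → ℂ)
    (hφ : ∀ x₁ x₂ : ℝ, φ (x₁, x₂) = Complex.exp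
      (-((αp / 2 : ℝ) : ℂ) * ((x₁ : ℂ) ^ 2 + (x₂ : ℂ) ^ 2)
        - km * (x₁ : ℂ) - kp * (x₂ : ℂ)
        - ((ξ * αm : ℝ) : ℂ) * (x₁ : ℂ) * (x₂ : ℂ))) :
    ∀ x₁ x₂ : ℝ,
      -pd1 (pd1 φ) (x₁, x₂) - pd2 (pd2 φ) (x₁, x₂)
        + (((x₁ ^ 2 + x₂ ^ 2 : ℝ) : ℂ) + 2 * Complex.I * (x₂ : ℂ)
            + ((2 * ε * x₁ * x₂ : ℝ) : ℂ)) * φ (x₁, x₂)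
      = ((Real.sqrt (1 + ε * ξ) + Real.sqrt (1 - ε * ξ) + 1 / (1 - ε ^ 2) : ℝ) : ℂ)
          * φ (x₁, x₂) := by
  intro x₁ x₂
  obtain ⟨hε₁, hε₂⟩ := hε
  have hξ_sq : ξ ^ 2 = 1 := by rcases hξ with rfl | rfl <;> norm_num
  have h_add_nonneg : 0 ≤ 1 + ε * ξ := by rcases hξ with rfl | rfl <;> linarith
  have h_sub_nonneg : 0 ≤ 1 - ε * ξ := by rcases hξ with rfl | rfl <;> linarith
  have hs : ((√(1 - ε ^ 2) : ℝ) : ℂ) ≠ 0 := by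
    exact_mod_cast (Real.sqrt_pos.mpr (by nlinarith)).ne'
  have h_add : (αp : ℂ) ^ 2 + ((ξ * αm : ℝ) : ℂ) ^ 2 = 1 := by
    exact_mod_cast alphaPlus_sq_add_sq hξ_sq h_add_nonneg h_sub_nonneg hαp hαm
  have h_mul : 2 * (αp : ℂ) * ((ξ * αm : ℝ) : ℂ) = ε := by
    exact_mod_cast two_mul_alphaPlus_mul hξ_sq h_add_nonneg h_sub_nonneg hαp hαm
  have h_sub : (αp : ℂ) ^ 2 - ((ξ * αm : ℝ) : ℂ) ^ 2 = ((√(1 - ε ^ 2) : ℝ) : ℂ) := by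
    exact_mod_cast alphaPlus_sq_sub_sq hξ_sq h_add_nonneg hαp hαm
  have hφ' : ∀ y₁ y₂ : ℝ, φ (y₁, y₂) = cexp (-(αp / 2 : ℂ) * y₁ ^ 2 + -(αp / 2 : ℂ) * y₂ ^ 2
      + -((ξ * αm : ℝ) : ℂ) * y₁ * y₂ + -km * y₁ + -kp * y₂ + 0) := fun y₁ y₂ => by
    rw [hφ]; push_cast; ring_nf
  have hkm' : km = -I * ((ξ * αm : ℝ) : ℂ) / ((√(1 - ε ^ 2) : ℝ) : ℂ) := by
    rw [hkm]; push_cast; ring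
  have key := gaussian_ground_state_identity h_add h_mul h_sub hs hkm' hkp x₁ x₂
  have h_two_mul : ((√(1 + ε * ξ) + √(1 - ε * ξ) : ℝ) : ℂ) = 2 * αp := by
    rw [hαp]; push_cast; ring
  rw [pd1_pd1_eq_of_eq_cexp_quadratic hφ', pd2_pd2_eq_of_eq_cexp_quadratic hφ']
  push_cast at key h_two_mul ⊢
  linear_combination φ (x₁, x₂) * (key - h_two_mul)
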